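/- arXiv:2012.12005 — 4 statements merged into one kernel-verified Lean document; each statement's English description precedes it below -/
import Mathlib

section
/- Let (X,d) be a metric space equipped with a second Hausdorff topology σ such that d is σ-sequentially lower semicontinuous. If a sequence (xₙ) in X converges to x in the metric d and every d-bounded sequence admits a σ-convergent subsequence, then xₙ converges to x in the topology σ. -/
/-!
Every subsequence of `u` is `d`-bounded, so it has a further subsequence converging in `σ` to
some `z`. Lower semicontinuity of `d` gives `d(z, x) ≤ liminf d(uₙ, x) = 0`, so `z = x`: every
subsequence has a further subsequence `σ`-converging to `x`, hence so does `u` itself.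
-/

open Filter Topology

section

variable {X : Type*} [MetricSpace X] {v : ℕ → X} {x : X}

lemma isBounded_range_of_tendsto_dist_zero
    (hv : Tendsto (fun n => dist (v n) x) atTop (𝓝 0)) : Bornology.IsBounded (Set.range v) :=
  Metric.isBounded_range_of_tendsto v (tendsto_iff_dist_tendsto_zero.2 hv)

lemma eq_of_dist_le_liminf_of_tendsto_dist_zero {z : X}
    (hv : Tendsto (fun n => dist (v n) x) atTop (𝓝 0))
    (hz : dist z x ≤ liminf (fun n => dist (v n) x) atTop) : z = x := by
  rw [hv.liminf_eq] at hz
  exact dist_le_zero.1 hz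

end

theorem stmt4_general {X : Type*} [MetricSpace X] (σ : TopologicalSpace X)
    (hcpt : ∀ u : ℕ → X, Bornology.IsBounded (Set.range u) →
      ∃ φ : ℕ → ℕ, StrictMono φ ∧ ∃ z : X,
        Filter.Tendsto (u ∘ φ) Filter.atTop (@nhds X σ z))
    (hlsc : ∀ (u : ℕ → X) (a b : X),
      Filter.Tendsto u Filter.atTop (@nhds X σ a) →
      dist a b ≤ Filter.liminf (fun n => dist (u n) b) Filter.atTop)
    (u : ℕ → X) (x : X)
    (hconv : Filter.Tendsto (fun n => dist (u n) x) Filter.atTop (nhds 0)) :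
    Filter.Tendsto u Filter.atTop (@nhds X σ x) := by
  refine tendsto_of_subseq_tendsto fun ns hns => ?_
  have hv : Tendsto (fun n => dist (u (ns n)) x) atTop (𝓝 0) := hconv.comp hns
  obtain ⟨ψ, hψ, z, hz⟩ := hcpt (u ∘ ns) (isBounded_range_of_tendsto_dist_zero hv)
  have hzx : z = x :=
    eq_of_dist_le_liminf_of_tendsto_dist_zero (hv.comp hψ.tendsto_atTop) (hlsc _ z x hz)
  exact ⟨ψ, hzx ▸ hz⟩

/-- if `d`-bounded sequences admit `σ`-convergent subsequences and the
distance is `σ`-sequentially lower semicontinuous, then metric convergence implies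
`σ`-convergence. -/
theorem stmt4 {X : Type*} [MetricSpace X] (σ : TopologicalSpace X)
    (hH : @T2Space X σ)
    (hcpt : ∀ u : ℕ → X, Bornology.IsBounded (Set.range u) →
      ∃ φ : ℕ → ℕ, StrictMono φ ∧ ∃ z : X,
        Filter.Tendsto (u ∘ φ) Filter.atTop (@nhds X σ z))
    (hlsc : ∀ (u : ℕ → X) (a b : X),
      Filter.Tendsto u Filter.atTop (@nhds X σ a) →
      dist a b ≤ Filter.liminf (fun n => dist (u n) b) Filter.atTop)
    (u : ℕ → X) (x : X)
    (hconv : Filter.Tendsto (fun n => dist (u n) x) Filter.atTop (nhds 0)) :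
    Filter.Tendsto u Filter.atTop (@nhds X σ x) :=
  stmt4_general σ hcpt hlsc u x hconv
end

section
/- Let M be a smooth Riemannian manifold, V : M → ℝ smooth, q : [0,1] → M a smooth curve, h : [0,1] → [0,∞) smooth, and define q̃_t = Φ(h(t), q_t) where Φ is the gradient flow of V. If the gradient flow satisfies the contraction d(Φ(s,p),Φ(s,p')) ≤ e^{-λs} d(p,p'), then for all t ∈ [0,1]: (1/2)|dq̃_t/dt|² + (1/2)|h'(t)|² |∇V(q̃_t)|² + h'(t) (d/dt)V(q̃_t) ≤ (1/2) e^{-2λ h(t)} |dq_t/dt|². -/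
/-- Riemannian chain-rule estimate, formalized on a real inner product
space: for the perturbed curve `q̃_t = Φ(h(t), q_t)` of a smooth curve `q` along the
`λ`-contractive gradient flow `Φ` of `V`, one has
`(1/2)|q̃'_t|² + (1/2)|h'(t)|² |∇V(q̃_t)|² + h'(t)(d/dt)V(q̃_t)
  ≤ (1/2) e^{-2λh(t)} |q'_t|²` for all `t ∈ [0,1]`. -/
theorem stmt13 {M : Type*} [NormedAddCommGroup M] [InnerProductSpace ℝ M]
    [CompleteSpace M]
    (V : M → ℝ) (Φ : ℝ → M → M) (lam : ℝ)
    (hV : ContDiff ℝ (⊤ : ℕ∞) V)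
    (hΦsmooth : ContDiff ℝ (⊤ : ℕ∞) (fun p : ℝ × M => Φ p.1 p.2))
    (hΦ0 : ∀ p, Φ 0 p = p)
    (hflow : ∀ p : M, ∀ s : ℝ,
      HasDerivAt (fun u => Φ u p) (-(gradient V (Φ s p))) s)
    (hcontr : ∀ s : ℝ, 0 ≤ s → ∀ p p' : M,
      dist (Φ s p) (Φ s p') ≤ Real.exp (-lam * s) * dist p p')
    (q : ℝ → M) (h : ℝ → ℝ)
    (hq : ContDiff ℝ (⊤ : ℕ∞) q) (hh : ContDiff ℝ (⊤ : ℕ∞) h) (hh0 : ∀ t, 0 ≤ h t) :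
    ∀ t ∈ Set.Icc (0:ℝ) 1,
      (1 / 2) * ‖deriv (fun u => Φ (h u) (q u)) t‖ ^ 2
        + (1 / 2) * (deriv h t) ^ 2 * ‖gradient V (Φ (h t) (q t))‖ ^ 2
        + deriv h t * deriv (fun u => V (Φ (h u) (q u))) t
      ≤ (1 / 2) * Real.exp (-2 * lam * h t) * ‖deriv q t‖ ^ 2 := by
  intro t _ht
  set s : ℝ := h t with hs
  set p : M := q t with hp
  set a : ℝ := deriv h t with ha
  set v : M := deriv q t with hv
  set g : M := gradient V (Φ s p) with hg
  set F : ℝ × M → M := fun pr => Φ pr.1 pr.2 with hF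
  have hFd : HasFDerivAt F (fderiv ℝ F (s, p)) (s, p) :=
    (hΦsmooth.differentiable (by simp) (s, p)).hasFDerivAt
  set D := fderiv ℝ F (s, p) with hD
  -- derivative of t ↦ (h t, q t)
  have hhd : HasDerivAt h a t := (hh.differentiable (by simp) t).hasDerivAt
  have hqd : HasDerivAt q v t := (hq.differentiable (by simp) t).hasDerivAt
  have hγ : HasDerivAt (fun u => (h u, q u)) (a, v) t := HasDerivAt.prodMk hhd hqd
  -- derivative of the perturbed curve
  have hA : HasDerivAt (fun u => Φ (h u) (q u)) (D (a, v)) t := by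
    have := hFd.comp_hasDerivAt t hγ
    exact this
  -- D (1, 0) = -g
  have hD10 : D (1, 0) = -g := by
    have h1 : HasDerivAt (fun u : ℝ => (u, p)) ((1 : ℝ), (0 : M)) s :=
      HasDerivAt.prodMk (hasDerivAt_id s) (hasDerivAt_const s p)
    have h2 : HasDerivAt (fun u : ℝ => Φ u p) (D (1, 0)) s := by
      have := hFd.comp_hasDerivAt s h1; exact this
    exact h2.unique (hflow p s)
  -- bound on the spatial derivative
  set w : M := D (0, v) with hw
  have hwle : ‖w‖ ≤ Real.exp (-lam * s) * ‖v‖ := by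
    set T : M →L[ℝ] M := D.comp (ContinuousLinearMap.inr ℝ ℝ M) with hT
    have hTd : HasFDerivAt (fun p' => Φ s p') T p := by
      have h1 : HasFDerivAt (fun p' : M => ((s : ℝ), p'))
          (ContinuousLinearMap.inr ℝ ℝ M) p := by
        exact HasFDerivAt.prodMk (hasFDerivAt_const s p) (hasFDerivAt_id p)
      exact hFd.comp p h1
    have hlip : LipschitzWith (Real.exp (-lam * s)).toNNReal (fun p' => Φ s p') := by
      refine LipschitzWith.of_dist_le_mul fun x y => ?_
      rw [Real.coe_toNNReal _ (Real.exp_pos _).le]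
      exact hcontr s (hh0 t) x y
    have hTn : ‖T‖ ≤ Real.exp (-lam * s) := by
      have := hTd.le_of_lipschitz hlip
      rwa [Real.coe_toNNReal _ (Real.exp_pos _).le] at this
    calc ‖w‖ = ‖T v‖ := rfl
      _ ≤ ‖T‖ * ‖v‖ := T.le_opNorm v
      _ ≤ Real.exp (-lam * s) * ‖v‖ := by
          exact mul_le_mul_of_nonneg_right hTn (norm_nonneg v)
  -- decompose A
  have hdec : D (a, v) = a • (-g) + w := by
    have : ((a : ℝ), v) = a • ((1 : ℝ), (0 : M)) + ((0 : ℝ), v) := by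
      simp [Prod.ext_iff]
    rw [this, map_add, map_smul, hD10]
  set A : M := D (a, v) with hAdef
  -- derivative of V along the perturbed curve
  have hVd : HasGradientAt V g (Φ s p) :=
    (hV.differentiable (by simp) (Φ s p)).hasGradientAt
  have hVA : HasDerivAt (fun u => V (Φ (h u) (q u))) (inner ℝ g A : ℝ) t := by
    have := hVd.hasFDerivAt.comp_hasDerivAt t hA
    exact this
  -- rewrite derivs
  rw [hA.deriv, hVA.deriv]
  have hexp : Real.exp (-lam * s) ^ 2 = Real.exp (-2 * lam * s) := by
    rw [sq, ← Real.exp_add]; ring_nf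
  have key : (1 / 2) * ‖A‖ ^ 2 + (1 / 2) * a ^ 2 * ‖g‖ ^ 2
      + a * (inner ℝ g A : ℝ) = (1 / 2) * ‖w‖ ^ 2 := by
    have hAe : A = -(a • g) + w := by rw [hdec, smul_neg]
    rw [hAe]
    rw [@norm_add_sq_real, inner_add_right, norm_neg, norm_smul,
      inner_neg_left, inner_neg_right, real_inner_smul_left,
      real_inner_smul_right, real_inner_self_eq_norm_sq]
    simp only [Real.norm_eq_abs, mul_pow, sq_abs]
    ring
  rw [key]
  have h2 : ‖w‖ ^ 2 ≤ (Real.exp (-lam * s) * ‖v‖) ^ 2 := by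
    apply sq_le_sq' _ hwle
    have := norm_nonneg w
    nlinarith [mul_nonneg (Real.exp_pos (-lam * s)).le (norm_nonneg v)]
  calc (1/2) * ‖w‖^2 ≤ (1/2) * ((Real.exp (-lam * s) * ‖v‖)^2) := by linarith
    _ = (1/2) * Real.exp (-2 * lam * s) * ‖v‖^2 := by rw [mul_pow, hexp]; ring
end

section
/- Let (X,d) be a metric space with a Hausdorff topology σ such that d-bounded sets are sequentially σ-compact and d is σ-sequentially lower semicontinuous. Let γⁿ : [0,1] → X be curves with common endpoints x, y and uniformly bounded kinetic action A(γⁿ) ≤ C. Then there exist a subsequence and a 1/2-Hölder continuous curve γ : [0,1] → X with γ₀ = x, γ₁ = y such that γⁿ_t → γ_t in σ for every t ∈ [0,1], and A(γ) ≤ liminf A(γⁿ). -/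
/-!
Partitions with two points show that action at most `C` forces
`d(γₛ, γₜ) ≤ √(2C) √|s - t|`. The curves are therefore equicontinuous and, having a common
endpoint, stay in a fixed ball; a diagonal extraction makes them σ-converge at the points of a
dense sequence of times. At any other time `t`, two σ-limits of subsequences are both close to
the limit at a nearby dense time, by the σ-lower semicontinuity of `d`, so they coincide and the
whole subsequence converges. The same lower semicontinuity passes the Hölder bound to the limit
curve, and passes the action to the limit partition by partition: truncating the distances
`d(γⁿ_{tᵢ₊₁}, γⁿ_{tᵢ})` at their limit values gives sequences converging from below.
-/

open scoped ENNReal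

/-- The kinetic action (2-energy) of a curve `γ : [0,1] → X`, defined as the supremum
over partitions of `(1/2) Σ d(γ(t_{i+1}), γ(t_i))² / (t_{i+1} − t_i)`; for absolutely
continuous curves it coincides with `(1/2)∫₀¹ |γ̇_t|² dt`. -/
noncomputable def kineticAction {X : Type*} [MetricSpace X] (γ : ℝ → X) : ℝ≥0∞ :=
  ⨆ (n : ℕ) (t : Fin (n + 1) → ℝ) (_ : Monotone t) (_ : ∀ i, t i ∈ Set.Icc (0:ℝ) 1),
    ENNReal.ofReal ((1 / 2) * ∑ i : Fin n,
      dist (γ (t i.succ)) (γ (t i.castSucc)) ^ 2 / (t i.succ - t i.castSucc))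

open Filter Topology Set

theorem exists_strictMono_forall_tendsto {Y : Type*} [TopologicalSpace Y] (u : ℕ → ℕ → Y)
    (h : ∀ j (ψ : ℕ → ℕ), StrictMono ψ →
      ∃ ρ : ℕ → ℕ, StrictMono ρ ∧ ∃ z, Tendsto (fun n => u j (ψ (ρ n))) atTop (𝓝 z)) :
    ∃ φ : ℕ → ℕ, StrictMono φ ∧ ∀ j, ∃ z, Tendsto (fun n => u j (φ n)) atTop (𝓝 z) := by
  choose ρ hρ z hz using h
  -- `Ψ (j + 1)` refines `Ψ j` so that `u j` converges along it.
  let Ψ : ℕ → {ψ : ℕ → ℕ // StrictMono ψ} := fun j =>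
    Nat.rec ⟨id, strictMono_id⟩ (fun j ψ => ⟨ψ.1 ∘ ρ j ψ.1 ψ.2, ψ.2.comp (hρ j ψ.1 ψ.2)⟩) j
  have hnested : ∀ j k, j ≤ k → ∀ n, ∃ m ≥ n, (Ψ k).1 n = (Ψ j).1 m := by
    intro j k hjk
    induction k, hjk using Nat.le_induction with
    | base => exact fun n => ⟨n, le_rfl, rfl⟩
    | succ k _ ih =>
      intro n
      obtain ⟨m, hm, heq⟩ := ih (ρ k _ (Ψ k).2 n)
      exact ⟨m, (hρ k _ _).le_apply.trans hm, heq⟩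
  refine ⟨fun n => (Ψ n).1 n, strictMono_nat_of_lt_succ fun n => ?_, fun j => ⟨z j _ (Ψ j).2, ?_⟩⟩
  · exact (Ψ n).2 (Nat.lt_succ_self n |>.trans_le (hρ n _ _).le_apply)
  · rw [tendsto_atTop']
    intro U hU
    obtain ⟨M, hM⟩ := tendsto_atTop'.1 (hz j _ (Ψ j).2) U hU
    refine ⟨max (j + 1) M, fun n hn => ?_⟩
    obtain ⟨m, hnm, heq⟩ := hnested (j + 1) n (le_of_max_le_left hn) n
    show u j ((Ψ n).1 n) ∈ U
    rw [heq]
    exact hM m ((le_of_max_le_right hn).trans hnm)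

section WeakTopology

variable {X : Type*}

def IsSeqLowerSemicontinuousDist [PseudoMetricSpace X] (σ : TopologicalSpace X) : Prop :=
  ∀ (u v : ℕ → X) (a b : X), Tendsto u atTop (@nhds X σ a) → Tendsto v atTop (@nhds X σ b) →
    dist a b ≤ liminf (fun n => dist (u n) (v n)) atTop

def IsBoundedSeqCompact [PseudoMetricSpace X] (σ : TopologicalSpace X) : Prop :=
  ∀ u : ℕ → X, Bornology.IsBounded (range u) →
    ∃ φ : ℕ → ℕ, StrictMono φ ∧ ∃ z, Tendsto (u ∘ φ) atTop (@nhds X σ z)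

theorem IsSeqLowerSemicontinuousDist.dist_le [PseudoMetricSpace X] {σ : TopologicalSpace X}
    (hd : IsSeqLowerSemicontinuousDist σ) {u v : ℕ → X} {a b : X} {c : ℝ}
    (hu : Tendsto u atTop (@nhds X σ a)) (hv : Tendsto v atTop (@nhds X σ b))
    (h : ∀ᶠ n in atTop, dist (u n) (v n) ≤ c) : dist a b ≤ c :=
  (hd u v a b hu hv).trans (liminf_le_of_frequently_le h.frequently
    (isBoundedUnder_of ⟨0, fun _ => dist_nonneg⟩))

theorem IsSeqLowerSemicontinuousDist.eq_of_tendsto [MetricSpace X] {σ : TopologicalSpace X}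
    (hd : IsSeqLowerSemicontinuousDist σ) {u : ℕ → X} {a b : X}
    (ha : Tendsto u atTop (@nhds X σ a)) (hb : Tendsto u atTop (@nhds X σ b)) : a = b :=
  dist_le_zero.1 (hd.dist_le ha hb (Eventually.of_forall fun n => (dist_self (u n)).le))

theorem exists_strictMono_tendsto_of_equicontinuous [MetricSpace X] {σ : TopologicalSpace X}
    (hcpt : IsBoundedSeqCompact σ) (hd : IsSeqLowerSemicontinuousDist σ)
    {T : Type*} [TopologicalSpace T] [TopologicalSpace.SeparableSpace T] [Nonempty T]
    {f : ℕ → T → X} (hf : Equicontinuous f)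
    (hbdd : ∀ t, Bornology.IsBounded (range fun n => f n t)) :
    ∃ φ : ℕ → ℕ, StrictMono φ ∧ ∀ t, ∃ z, Tendsto (fun k => f (φ k) t) atTop (@nhds X σ z) := by
  have hsub : ∀ t (ψ : ℕ → ℕ), ∃ ρ : ℕ → ℕ, StrictMono ρ ∧
      ∃ z, Tendsto (fun n => f (ψ (ρ n)) t) atTop (@nhds X σ z) := fun t ψ =>
    hcpt _ ((hbdd t).subset (range_comp_subset_range ψ fun n => f n t))
  obtain ⟨e, he⟩ := TopologicalSpace.exists_dense_seq T
  obtain ⟨φ, hφ, hconv⟩ :=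
    @exists_strictMono_forall_tendsto X σ (fun j n => f n (e j)) fun j ψ _ => hsub (e j) ψ
  choose L hL using hconv
  refine ⟨φ, hφ, fun t => ?_⟩
  -- Two subsequential limits at `t` are both `ε / 2`-close to the limit at a dense point near `t`.
  have huniq : ∀ ρ₁ ρ₂ : ℕ → ℕ, Tendsto ρ₁ atTop atTop → Tendsto ρ₂ atTop atTop → ∀ w₁ w₂,
      Tendsto (fun k => f (φ (ρ₁ k)) t) atTop (@nhds X σ w₁) →
      Tendsto (fun k => f (φ (ρ₂ k)) t) atTop (@nhds X σ w₂) → w₁ = w₂ := by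
    intro ρ₁ ρ₂ hρ₁ hρ₂ w₁ w₂ hw₁ hw₂
    refine eq_of_forall_dist_le fun ε hε => ?_
    obtain ⟨_, ⟨j, rfl⟩, hj⟩ := he.inter_nhds_nonempty
      (Metric.equicontinuousAt_iff_right.1 (hf t) (ε / 2) (half_pos hε))
    have hclose : ∀ ρ : ℕ → ℕ, Tendsto ρ atTop atTop → ∀ w,
        Tendsto (fun k => f (φ (ρ k)) t) atTop (@nhds X σ w) → dist w (L j) ≤ ε / 2 :=
      fun ρ hρ w hw => hd.dist_le hw ((hL j).comp hρ) (Eventually.of_forall fun k => (hj _).le)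
    calc dist w₁ w₂ ≤ dist w₁ (L j) + dist w₂ (L j) := dist_triangle_right _ _ _
      _ ≤ ε / 2 + ε / 2 := add_le_add (hclose ρ₁ hρ₁ w₁ hw₁) (hclose ρ₂ hρ₂ w₂ hw₂)
      _ = ε := add_halves ε
  obtain ⟨ρ, hρ, z, hz⟩ := hsub t φ
  refine ⟨z, tendsto_of_subseq_tendsto fun ns hns => ?_⟩
  obtain ⟨ms, hms, w, hw⟩ := hsub t (φ ∘ ns)
  refine ⟨ms, ?_⟩
  rwa [huniq _ _ (hns.comp hms.tendsto_atTop) hρ.tendsto_atTop w z hw hz] at hw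

end WeakTopology

theorem tendsto_min_of_le_liminf {ι α : Type*} [ConditionallyCompleteLinearOrder α]
    [TopologicalSpace α] [OrderTopology α] {l : Filter ι} {u : ι → α} {a : α}
    (hu : IsBoundedUnder (· ≥ ·) l u) (h : a ≤ liminf u l) :
    Tendsto (fun k => min (u k) a) l (𝓝 a) :=
  tendsto_order.2
    ⟨fun _ hb => (eventually_lt_of_lt_liminf (hb.trans_le h) hu).mono fun _ hk => lt_min hk hb,
      fun _ hb => Eventually.of_forall fun _ => (min_le_right _ _).trans_lt hb⟩

noncomputable def partitionEnergy {n : ℕ} (Δ d : Fin n → ℝ) : ℝ≥0∞ :=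
  ENNReal.ofReal ((1 / 2) * ∑ i, d i ^ 2 / Δ i)

theorem continuous_partitionEnergy {n : ℕ} (Δ : Fin n → ℝ) : Continuous (partitionEnergy Δ) :=
  ENNReal.continuous_ofReal.comp (by fun_prop)

theorem partitionEnergy_mono {n : ℕ} {Δ d d' : Fin n → ℝ} (hΔ : 0 ≤ Δ) (hd : 0 ≤ d)
    (h : d ≤ d') : partitionEnergy Δ d ≤ partitionEnergy Δ d' := by
  unfold partitionEnergy
  gcongr with i
  · exact hΔ i
  · exact hd i
  · exact h i

theorem partitionEnergy_le_liminf {ι : Type*} {l : Filter ι} [l.NeBot] {n : ℕ}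
    {Δ d : Fin n → ℝ} {a : ι → Fin n → ℝ} (hΔ : 0 ≤ Δ) (hd : 0 ≤ d) (ha : ∀ k, 0 ≤ a k)
    (h : ∀ i, d i ≤ liminf (fun k => a k i) l) :
    partitionEnergy Δ d ≤ liminf (fun k => partitionEnergy Δ (a k)) l := by
  -- Truncating `a k` at `d` produces a sequence converging to `d` from below.
  have hmin : Tendsto (fun k i => min (a k i) (d i)) l (𝓝 d) :=
    tendsto_pi_nhds.2 fun i =>
      tendsto_min_of_le_liminf (isBoundedUnder_of ⟨0, fun k => ha k i⟩) (h i)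
  calc partitionEnergy Δ d = liminf (fun k => partitionEnergy Δ fun i => min (a k i) (d i)) l :=
        (((continuous_partitionEnergy Δ).tendsto d).comp hmin).liminf_eq.symm
    _ ≤ liminf (fun k => partitionEnergy Δ (a k)) l :=
        liminf_le_liminf (Eventually.of_forall fun k => partitionEnergy_mono hΔ
          (fun i => le_min (ha k i) (hd i)) fun i => min_le_left _ _)

section KineticAction

variable {X : Type*} [MetricSpace X]

theorem partitionEnergy_le_kineticAction (γ : ℝ → X) {n : ℕ} {t : Fin (n + 1) → ℝ}
    (ht : Monotone t) (ht01 : ∀ i, t i ∈ Icc (0 : ℝ) 1) :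
    partitionEnergy (fun i => t i.succ - t i.castSucc)
      (fun i => dist (γ (t i.succ)) (γ (t i.castSucc))) ≤ kineticAction γ :=
  le_iSup₂_of_le n t (le_iSup₂_of_le ht ht01 le_rfl)

theorem kineticAction_le_liminf {ι : Type*} {l : Filter ι} [l.NeBot] {γ : ι → ℝ → X}
    {g : ℝ → X}
    (h : ∀ s ∈ Icc (0 : ℝ) 1, ∀ t ∈ Icc (0 : ℝ) 1,
      dist (g s) (g t) ≤ liminf (fun k => dist (γ k s) (γ k t)) l) :
    kineticAction g ≤ liminf (fun k => kineticAction (γ k)) l := by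
  refine iSup_le fun n => iSup_le fun t => iSup_le fun ht => iSup_le fun ht01 => ?_
  have hΔ : 0 ≤ fun i : Fin n => t i.succ - t i.castSucc :=
    fun i => sub_nonneg.2 (ht (Fin.castSucc_le_succ i))
  exact (partitionEnergy_le_liminf hΔ (fun i => dist_nonneg) (fun k i => dist_nonneg)
    fun i => h _ (ht01 _) _ (ht01 _)).trans
      (liminf_le_liminf (Eventually.of_forall fun k => partitionEnergy_le_kineticAction _ ht ht01))

theorem dist_sq_le_of_kineticAction_le {γ : ℝ → X} {C : ℝ} (hC : 0 ≤ C)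
    (h : kineticAction γ ≤ ENNReal.ofReal C) {s t : ℝ} (hs : s ∈ Icc (0 : ℝ) 1)
    (ht : t ∈ Icc (0 : ℝ) 1) (hst : s < t) : dist (γ t) (γ s) ^ 2 ≤ 2 * C * (t - s) := by
  have hmono : Monotone ![s, t] := Fin.monotone_iff_le_succ.2 fun i => by
    fin_cases i; simpa using hst.le
  have hmem : ∀ i, ![s, t] i ∈ Icc (0 : ℝ) 1 := fun i => by fin_cases i <;> assumption
  have := (partitionEnergy_le_kineticAction γ hmono hmem).trans h
  rw [partitionEnergy, ENNReal.ofReal_le_ofReal_iff hC, Fin.sum_univ_one] at this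
  simp only [Fin.succ_zero_eq_one, Fin.castSucc_zero, Matrix.cons_val_one,
    Matrix.cons_val_fin_one, Matrix.cons_val_zero] at this
  calc dist (γ t) (γ s) ^ 2 = 2 * (1 / 2 * (dist (γ t) (γ s) ^ 2 / (t - s))) * (t - s) := by
        field_simp [(sub_pos.2 hst).ne']
    _ ≤ 2 * C * (t - s) := by gcongr

theorem dist_le_of_kineticAction_le {γ : ℝ → X} {C : ℝ} (hC : 0 ≤ C)
    (h : kineticAction γ ≤ ENNReal.ofReal C) {s t : ℝ} (hs : s ∈ Icc (0 : ℝ) 1)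
    (ht : t ∈ Icc (0 : ℝ) 1) : dist (γ s) (γ t) ≤ √(2 * C) * √|s - t| := by
  wlog hst : s ≤ t generalizing s t
  · rw [dist_comm, abs_sub_comm]
    exact this ht hs (le_of_not_ge hst)
  rcases hst.eq_or_lt with rfl | hlt
  · simp
  rw [abs_sub_comm, abs_of_nonneg (sub_nonneg.2 hst), ← Real.sqrt_mul (by positivity), dist_comm]
  exact (Real.le_sqrt dist_nonneg (mul_nonneg (by positivity) (sub_nonneg.2 hst))).2
    (dist_sq_le_of_kineticAction_le hC h hs ht hlt)

theorem equicontinuous_of_kineticAction_le {ι : Type*} {γ : ι → ℝ → X} {C : ℝ} (hC : 0 ≤ C)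
    (hact : ∀ i, kineticAction (γ i) ≤ ENNReal.ofReal C) :
    Equicontinuous fun i (t : Icc (0 : ℝ) 1) => γ i t := by
  have hmod : Tendsto (fun r => √(2 * C) * √r) (𝓝 0) (𝓝 0) := by
    simpa using (show Continuous fun r => √(2 * C) * √r by fun_prop).tendsto 0
  refine (Metric.uniformEquicontinuous_of_continuity_modulus _ hmod _
    fun s t i => ?_).equicontinuous
  simpa only [Subtype.dist_eq, Real.dist_eq] using
    dist_le_of_kineticAction_le hC (hact i) s.2 t.2

theorem isBounded_range_of_kineticAction_le {ι : Type*} {γ : ι → ℝ → X} {C : ℝ} (hC : 0 ≤ C)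
    (hact : ∀ i, kineticAction (γ i) ≤ ENNReal.ofReal C) {x : X} (h0 : ∀ i, γ i 0 = x)
    {t : ℝ} (ht : t ∈ Icc (0 : ℝ) 1) : Bornology.IsBounded (range fun i => γ i t) := by
  refine (Metric.isBounded_closedBall (x := x) (r := √(2 * C))).subset
    (range_subset_iff.2 fun i => ?_)
  rw [Metric.mem_closedBall, ← h0 i]
  calc dist (γ i t) (γ i 0) ≤ √(2 * C) * √|t - 0| :=
        dist_le_of_kineticAction_le hC (hact i) ht (left_mem_Icc.2 zero_le_one)
    _ ≤ √(2 * C) := mul_le_of_le_one_right (Real.sqrt_nonneg _)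
        (Real.sqrt_le_one.2 (by simpa [abs_of_nonneg ht.1] using ht.2))

end KineticAction

theorem stmt15_general {X : Type*} [MetricSpace X] (σ : TopologicalSpace X)
    (hcpt : ∀ u : ℕ → X, Bornology.IsBounded (Set.range u) →
      ∃ φ : ℕ → ℕ, StrictMono φ ∧ ∃ z : X,
        Filter.Tendsto (u ∘ φ) Filter.atTop (@nhds X σ z))
    (hdlsc : ∀ (u v : ℕ → X) (a b : X),
      Filter.Tendsto u Filter.atTop (@nhds X σ a) →
      Filter.Tendsto v Filter.atTop (@nhds X σ b) →
      dist a b ≤ Filter.liminf (fun n => dist (u n) (v n)) Filter.atTop)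
    (γ : ℕ → ℝ → X) (x y : X) (C : ℝ) (hC : 0 ≤ C)
    (hends : ∀ n, γ n 0 = x ∧ γ n 1 = y)
    (hact : ∀ n, kineticAction (γ n) ≤ ENNReal.ofReal C) :
    ∃ (φ : ℕ → ℕ) (g : ℝ → X), StrictMono φ ∧ g 0 = x ∧ g 1 = y ∧
      (∀ s ∈ Set.Icc (0:ℝ) 1, ∀ t ∈ Set.Icc (0:ℝ) 1,
        dist (g s) (g t) ≤ Real.sqrt (2 * C) * Real.sqrt |s - t|) ∧
      (∀ t ∈ Set.Icc (0:ℝ) 1,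
        Filter.Tendsto (fun k => γ (φ k) t) Filter.atTop (@nhds X σ (g t))) ∧
      kineticAction g ≤ Filter.liminf (fun k => kineticAction (γ (φ k))) Filter.atTop := by
  have hd : IsSeqLowerSemicontinuousDist σ := hdlsc
  obtain ⟨φ, hφ, hconv⟩ := exists_strictMono_tendsto_of_equicontinuous hcpt hd
    (equicontinuous_of_kineticAction_le hC hact)
    fun t => isBounded_range_of_kineticAction_le hC hact (fun n => (hends n).1) t.2
  choose L hL using hconv
  set g := IccExtend zero_le_one L
  have hg : ∀ t ∈ Icc (0 : ℝ) 1, Tendsto (fun k => γ (φ k) t) atTop (@nhds X σ (g t)) :=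
    fun t ht => by simpa only [g, IccExtend_of_mem _ _ ht] using hL ⟨t, ht⟩
  have hgdist : ∀ s ∈ Icc (0 : ℝ) 1, ∀ t ∈ Icc (0 : ℝ) 1,
      dist (g s) (g t) ≤ liminf (fun k => dist (γ (φ k) s) (γ (φ k) t)) atTop :=
    fun s hs t ht => hdlsc _ _ _ _ (hg s hs) (hg t ht)
  refine ⟨φ, g, hφ, ?_, ?_, fun s hs t ht => ?_, hg, kineticAction_le_liminf hgdist⟩
  · exact hd.eq_of_tendsto (hg 0 (left_mem_Icc.2 zero_le_one))
      (by simpa only [(hends _).1] using tendsto_const_nhds)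
  · exact hd.eq_of_tendsto (hg 1 (right_mem_Icc.2 zero_le_one))
      (by simpa only [(hends _).2] using tendsto_const_nhds)
  · exact hd.dist_le (hg s hs) (hg t ht) (Eventually.of_forall fun k =>
      dist_le_of_kineticAction_le hC (hact _) hs ht)

/-- compactness and lower semicontinuity. Curves with common endpoints
and uniformly bounded kinetic action admit a subsequence converging pointwise in the
`σ`-topology to a `1/2`-Hölder curve with the same endpoints, along which the action
is lower semicontinuous. -/
theorem stmt15 {X : Type*} [MetricSpace X] (σ : TopologicalSpace X)
    (hH : @T2Space X σ)
    (hcpt : ∀ u : ℕ → X, Bornology.IsBounded (Set.range u) →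
      ∃ φ : ℕ → ℕ, StrictMono φ ∧ ∃ z : X,
        Filter.Tendsto (u ∘ φ) Filter.atTop (@nhds X σ z))
    (hdlsc : ∀ (u v : ℕ → X) (a b : X),
      Filter.Tendsto u Filter.atTop (@nhds X σ a) →
      Filter.Tendsto v Filter.atTop (@nhds X σ b) →
      dist a b ≤ Filter.liminf (fun n => dist (u n) (v n)) Filter.atTop)
    (γ : ℕ → ℝ → X) (x y : X) (C : ℝ) (hC : 0 ≤ C)
    (hends : ∀ n, γ n 0 = x ∧ γ n 1 = y)
    (hact : ∀ n, kineticAction (γ n) ≤ ENNReal.ofReal C) :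
    ∃ (φ : ℕ → ℕ) (g : ℝ → X), StrictMono φ ∧ g 0 = x ∧ g 1 = y ∧
      (∀ s ∈ Set.Icc (0:ℝ) 1, ∀ t ∈ Set.Icc (0:ℝ) 1,
        dist (g s) (g t) ≤ Real.sqrt (2 * C) * Real.sqrt |s - t|) ∧
      (∀ t ∈ Set.Icc (0:ℝ) 1,
        Filter.Tendsto (fun k => γ (φ k) t) Filter.atTop (@nhds X σ (g t))) ∧
      kineticAction g ≤ Filter.liminf (fun k => kineticAction (γ (φ k))) Filter.atTop :=
  stmt15_general σ hcpt hdlsc γ x y C hC hends hact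
end

section
/- Let E be a functional on a complete metric space (X,d) admitting EVI_λ gradient flows from every point, with semigroup S and slope |∂E| satisfying the monotonicity t ↦ e^{λt}|∂E|(S_t x) nonincreasing and the dissipation identity E(S_a x) − E(S_b x) = ∫_a^b |∂E|²(S_τ x) dτ for 0 < a ≤ b. Then for 0 < s < h: E(S_h x) − E(S_s x) ≤ (1/(2λ))(1 − e^{2λ(h−s)}) |∂E|²(S_h x) (interpreting (1/(2λ))(1 − e^{2λu}) as −u when λ = 0). -/
/-!
Monotonicity of `t ↦ e^{λt} |∂E|(S_t x)` gives `|∂E|(S_τ x) ≥ e^{λ(h-τ)} |∂E|(S_h x)` for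
`τ ≤ h`. Squaring, integrating over `[s, h]` and inserting the dissipation identity bounds
`E(S_h x) - E(S_s x)` by `-(∫_s^h e^{2λ(h-τ)} dτ) |∂E|²(S_h x)`, and that weight integrates to
`(e^{2λ(h-s)} - 1)/(2λ)`, or to `h - s` when `λ = 0`.
-/

open MeasureTheory Real Set

theorem integral_exp_mul_sub (c s h : ℝ) :
    ∫ τ in s..h, exp (c * (h - τ)) = if c = 0 then h - s else (exp (c * (h - s)) - 1) / c := by
  split_ifs with hc
  · simp [hc]
  · simp_rw [mul_sub]
    rw [intervalIntegral.integral_comp_sub_mul (fun x => exp x) hc, integral_exp]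
    simp [div_eq_inv_mul]

theorem exp_mul_sq_le_sq_of_exp_mul_le {a b lam τ h : ℝ} (ha : 0 ≤ a)
    (hle : exp (lam * h) * a ≤ exp (lam * τ) * b) :
    exp (2 * lam * (h - τ)) * a ^ 2 ≤ b ^ 2 := by
  have hdecay : exp (lam * (h - τ)) * a ≤ b := by
    rw [mul_sub, exp_sub, div_mul_eq_mul_div, div_le_iff₀ (exp_pos _)]
    linarith
  calc exp (2 * lam * (h - τ)) * a ^ 2 = (exp (lam * (h - τ)) * a) ^ 2 := by
        rw [mul_pow, ← exp_nat_mul]; ring_nf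
    _ ≤ b ^ 2 := pow_le_pow_left₀ (by positivity) hdecay 2

theorem integral_exp_mul_sub_mul_sq_le {f : ℝ → ℝ} {lam s h : ℝ} (hsh : s ≤ h) (hf : 0 ≤ f h)
    (hanti : AntitoneOn (fun t => exp (lam * t) * f t) (Icc s h))
    (hint : IntervalIntegrable (fun τ => f τ ^ 2) volume s h) :
    (∫ τ in s..h, exp (2 * lam * (h - τ))) * f h ^ 2 ≤ ∫ τ in s..h, f τ ^ 2 := by
  rw [← intervalIntegral.integral_mul_const]
  refine intervalIntegral.integral_mono_on hsh (Continuous.intervalIntegrable (by fun_prop) _ _)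
    hint fun τ hτ => ?_
  exact exp_mul_sq_le_sq_of_exp_mul_le hf
    (hanti hτ (right_mem_Icc.2 hsh) hτ.2)

/-- given the monotonicity `t ↦ e^{λt}|∂E|(S_t x)` nonincreasing and the
dissipation identity `E(S_a x) − E(S_b x) = ∫_a^b |∂E|²(S_τ x) dτ` along the flow,
for `0 < s < h` one has
`E(S_h x) − E(S_s x) ≤ (1/(2λ))(1 − e^{2λ(h−s)}) |∂E|²(S_h x)`
(read as `−(h−s)|∂E|²(S_h x)` when `λ = 0`). Here `slope = |∂E|`. -/
theorem stmt16 {X : Type*} [MetricSpace X] (E slope : X → ℝ) (S : ℝ → X → X)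
    (lam : ℝ) (x : X)
    (hslope0 : ∀ z : X, 0 ≤ slope z)
    (hmono : ∀ s t : ℝ, 0 < s → s ≤ t →
      Real.exp (lam * t) * slope (S t x) ≤ Real.exp (lam * s) * slope (S s x))
    (hint : ∀ a b : ℝ, 0 < a → a ≤ b →
      IntervalIntegrable (fun τ => slope (S τ x) ^ 2) volume a b)
    (hdiss : ∀ a b : ℝ, 0 < a → a ≤ b →
      E (S a x) - E (S b x) = ∫ τ in a..b, slope (S τ x) ^ 2) :
    ∀ s h : ℝ, 0 < s → s < h →
      E (S h x) - E (S s x) ≤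
        (if lam = 0 then -((h - s) * slope (S h x) ^ 2)
          else (1 / (2 * lam)) * (1 - Real.exp (2 * lam * (h - s))) * slope (S h x) ^ 2) := by
  intro s h hs hsh
  have hdissip := hdiss s h hs hsh.le
  have hbound := integral_exp_mul_sub_mul_sq_le (f := fun τ => slope (S τ x)) hsh.le
    (hslope0 _) (fun a ha b _ hab => hmono a b (hs.trans_le ha.1) hab) (hint s h hs hsh.le)
  rw [integral_exp_mul_sub] at hbound
  by_cases hlam : lam = 0
  · simp only [hlam, mul_zero, if_true] at hbound ⊢
    linarith
  · have h2lam : 2 * lam ≠ 0 := mul_ne_zero two_ne_zero hlam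
    rw [if_neg h2lam] at hbound
    rw [if_neg hlam]
    have hrewrite : 1 / (2 * lam) * (1 - exp (2 * lam * (h - s))) * slope (S h x) ^ 2 =
        -((exp (2 * lam * (h - s)) - 1) / (2 * lam) * slope (S h x) ^ 2) := by ring
    linarith
end
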